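/- Under the homogeneous DPP difference system with the stated regularity, boundary-condition encodings (H1)–(H2), and energy E(t), the energy satisfies the logarithmic-convexity inequality (E′(t))² ≤ E(t)·E″(t) for every t ∈ [0,T]. -/

import Mathlib

open Set MeasureTheory Matrix

/-- Divergence associated with a (spatial) Jacobian, i.e. the trace of the Fréchet
derivative of a vector field on ℝ³. -/
noncomputable def divOf (J : (Fin 3 → ℝ) →L[ℝ] (Fin 3 → ℝ)) : ℝ :=
  ∑ j : Fin 3, J (Pi.single j 1) j

/-- The continuous linear map `v ↦ g · v` associated with a gradient vector `g`;
`HasFDerivAt q (gradCLM g) x` says `g` is the spatial gradient of `q` at `x`. -/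
noncomputable def gradCLM (g : Fin 3 → ℝ) : (Fin 3 → ℝ) →L[ℝ] ℝ :=
  ∑ j : Fin 3, g j • (ContinuousLinearMap.proj j : (Fin 3 → ℝ) →L[ℝ] ℝ)

/-- The homogeneous double porosity/permeability (DPP) difference system on a bounded open
domain `Ω ⊆ ℝ³` and time interval `[0,T]`, together with all the regularity assumptions and
the boundary-condition encodings (H1)–(H2) described in the paper.

Fields `w₁, w₂` (velocity differences) and `q₁, q₂` (pressure differences) satisfy
`(γ/φᵢ) ∂wᵢ/∂t + μ Kᵢ⁻¹ wᵢ + ∇qᵢ = 0`, `div w₁ = −(β/μ)(q₁−q₂)`, `div w₂ = +(β/μ)(q₁−q₂)`.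
The time derivatives `dwᵢ, dqᵢ`, the spatial gradients `gqᵢ`, and the spatial Jacobians
`Jwᵢ, Jdwᵢ` (whose traces are the divergences of `wᵢ` and of `∂wᵢ/∂t`) are carried as data,
tied to the fields by `HasDerivWithinAt`/`HasFDerivAt` hypotheses. The hypothesis `leibniz`
expresses that differentiation in `t` under the integral over `Ω` is valid (for continuous
bounded integrands with continuous bounded time derivatives). -/
structure DPP where
  Ω : Set (Fin 3 → ℝ)
  hΩopen : IsOpen Ω
  hΩbdd : Bornology.IsBounded Ω
  T : ℝ
  hT : 0 < T
  γ : ℝ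
  μ : ℝ
  β : ℝ
  hγ : 0 < γ
  hμ : 0 < μ
  hβ : 0 < β
  φ₁ : (Fin 3 → ℝ) → ℝ
  φ₂ : (Fin 3 → ℝ) → ℝ
  hφ₁pos : ∀ x ∈ Ω, 0 < φ₁ x
  hφ₂pos : ∀ x ∈ Ω, 0 < φ₂ x
  hφ₁cont : ContinuousOn φ₁ Ω
  hφ₂cont : ContinuousOn φ₂ Ω
  hφ₁bdd : ∃ c > (0:ℝ), ∃ C : ℝ, ∀ x ∈ Ω, c ≤ φ₁ x ∧ φ₁ x ≤ C
  hφ₂bdd : ∃ c > (0:ℝ), ∃ C : ℝ, ∀ x ∈ Ω, c ≤ φ₂ x ∧ φ₂ x ≤ C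
  K₁ : (Fin 3 → ℝ) → Matrix (Fin 3) (Fin 3) ℝ
  K₂ : (Fin 3 → ℝ) → Matrix (Fin 3) (Fin 3) ℝ
  hK₁symm : ∀ x ∈ Ω, (K₁ x).IsSymm
  hK₂symm : ∀ x ∈ Ω, (K₂ x).IsSymm
  hK₁pd : ∀ x ∈ Ω, (K₁ x).PosDef
  hK₂pd : ∀ x ∈ Ω, (K₂ x).PosDef
  hK₁invcont : ∀ i j, ContinuousOn (fun x => (K₁ x)⁻¹ i j) Ω
  hK₂invcont : ∀ i j, ContinuousOn (fun x => (K₂ x)⁻¹ i j) Ω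
  hK₁invbdd : ∃ C : ℝ, ∀ x ∈ Ω, ∀ i j, |(K₁ x)⁻¹ i j| ≤ C
  hK₂invbdd : ∃ C : ℝ, ∀ x ∈ Ω, ∀ i j, |(K₂ x)⁻¹ i j| ≤ C
  -- the fields of the difference system
  w₁ : (Fin 3 → ℝ) → ℝ → (Fin 3 → ℝ)
  w₂ : (Fin 3 → ℝ) → ℝ → (Fin 3 → ℝ)
  q₁ : (Fin 3 → ℝ) → ℝ → ℝ
  q₂ : (Fin 3 → ℝ) → ℝ → ℝ
  -- derivative data: time derivatives, spatial gradients, spatial Jacobians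
  dw₁ : (Fin 3 → ℝ) → ℝ → (Fin 3 → ℝ)
  dw₂ : (Fin 3 → ℝ) → ℝ → (Fin 3 → ℝ)
  dq₁ : (Fin 3 → ℝ) → ℝ → ℝ
  dq₂ : (Fin 3 → ℝ) → ℝ → ℝ
  gq₁ : (Fin 3 → ℝ) → ℝ → (Fin 3 → ℝ)
  gq₂ : (Fin 3 → ℝ) → ℝ → (Fin 3 → ℝ)
  Jw₁ : (Fin 3 → ℝ) → ℝ → ((Fin 3 → ℝ) →L[ℝ] (Fin 3 → ℝ))
  Jw₂ : (Fin 3 → ℝ) → ℝ → ((Fin 3 → ℝ) →L[ℝ] (Fin 3 → ℝ))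
  Jdw₁ : (Fin 3 → ℝ) → ℝ → ((Fin 3 → ℝ) →L[ℝ] (Fin 3 → ℝ))
  Jdw₂ : (Fin 3 → ℝ) → ℝ → ((Fin 3 → ℝ) →L[ℝ] (Fin 3 → ℝ))
  -- C¹ regularity in time: the data are the actual derivatives
  hdw₁ : ∀ x ∈ Ω, ∀ t ∈ Icc (0:ℝ) T, HasDerivWithinAt (w₁ x) (dw₁ x t) (Icc (0:ℝ) T) t
  hdw₂ : ∀ x ∈ Ω, ∀ t ∈ Icc (0:ℝ) T, HasDerivWithinAt (w₂ x) (dw₂ x t) (Icc (0:ℝ) T) t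
  hdq₁ : ∀ x ∈ Ω, ∀ t ∈ Icc (0:ℝ) T, HasDerivWithinAt (q₁ x) (dq₁ x t) (Icc (0:ℝ) T) t
  hdq₂ : ∀ x ∈ Ω, ∀ t ∈ Icc (0:ℝ) T, HasDerivWithinAt (q₂ x) (dq₂ x t) (Icc (0:ℝ) T) t
  -- C¹ regularity in space: gradients and Jacobians
  hgq₁ : ∀ t ∈ Icc (0:ℝ) T, ∀ x ∈ Ω, HasFDerivAt (fun y => q₁ y t) (gradCLM (gq₁ x t)) x
  hgq₂ : ∀ t ∈ Icc (0:ℝ) T, ∀ x ∈ Ω, HasFDerivAt (fun y => q₂ y t) (gradCLM (gq₂ x t)) x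
  hJw₁ : ∀ t ∈ Icc (0:ℝ) T, ∀ x ∈ Ω, HasFDerivAt (fun y => w₁ y t) (Jw₁ x t) x
  hJw₂ : ∀ t ∈ Icc (0:ℝ) T, ∀ x ∈ Ω, HasFDerivAt (fun y => w₂ y t) (Jw₂ x t) x
  hJdw₁ : ∀ t ∈ Icc (0:ℝ) T, ∀ x ∈ Ω, HasFDerivAt (fun y => dw₁ y t) (Jdw₁ x t) x
  hJdw₂ : ∀ t ∈ Icc (0:ℝ) T, ∀ x ∈ Ω, HasFDerivAt (fun y => dw₂ y t) (Jdw₂ x t) x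
  -- `div (∂wᵢ/∂t) = ∂(div wᵢ)/∂t`
  hdivcomm₁ : ∀ x ∈ Ω, ∀ t ∈ Icc (0:ℝ) T,
    HasDerivWithinAt (fun s => divOf (Jw₁ x s)) (divOf (Jdw₁ x t)) (Icc (0:ℝ) T) t
  hdivcomm₂ : ∀ x ∈ Ω, ∀ t ∈ Icc (0:ℝ) T,
    HasDerivWithinAt (fun s => divOf (Jw₂ x s)) (divOf (Jdw₂ x t)) (Icc (0:ℝ) T) t
  -- joint continuity of the fields and of their appearing first derivatives
  hw₁cont : ContinuousOn (fun p : (Fin 3 → ℝ) × ℝ => w₁ p.1 p.2) (Ω ×ˢ Icc (0:ℝ) T)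
  hw₂cont : ContinuousOn (fun p : (Fin 3 → ℝ) × ℝ => w₂ p.1 p.2) (Ω ×ˢ Icc (0:ℝ) T)
  hq₁cont : ContinuousOn (fun p : (Fin 3 → ℝ) × ℝ => q₁ p.1 p.2) (Ω ×ˢ Icc (0:ℝ) T)
  hq₂cont : ContinuousOn (fun p : (Fin 3 → ℝ) × ℝ => q₂ p.1 p.2) (Ω ×ˢ Icc (0:ℝ) T)
  hdw₁cont : ContinuousOn (fun p : (Fin 3 → ℝ) × ℝ => dw₁ p.1 p.2) (Ω ×ˢ Icc (0:ℝ) T)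
  hdw₂cont : ContinuousOn (fun p : (Fin 3 → ℝ) × ℝ => dw₂ p.1 p.2) (Ω ×ˢ Icc (0:ℝ) T)
  hdq₁cont : ContinuousOn (fun p : (Fin 3 → ℝ) × ℝ => dq₁ p.1 p.2) (Ω ×ˢ Icc (0:ℝ) T)
  hdq₂cont : ContinuousOn (fun p : (Fin 3 → ℝ) × ℝ => dq₂ p.1 p.2) (Ω ×ˢ Icc (0:ℝ) T)
  hgq₁cont : ContinuousOn (fun p : (Fin 3 → ℝ) × ℝ => gq₁ p.1 p.2) (Ω ×ˢ Icc (0:ℝ) T)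
  hgq₂cont : ContinuousOn (fun p : (Fin 3 → ℝ) × ℝ => gq₂ p.1 p.2) (Ω ×ˢ Icc (0:ℝ) T)
  hdivw₁cont : ContinuousOn (fun p : (Fin 3 → ℝ) × ℝ => divOf (Jw₁ p.1 p.2)) (Ω ×ˢ Icc (0:ℝ) T)
  hdivw₂cont : ContinuousOn (fun p : (Fin 3 → ℝ) × ℝ => divOf (Jw₂ p.1 p.2)) (Ω ×ˢ Icc (0:ℝ) T)
  hdivdw₁cont : ContinuousOn (fun p : (Fin 3 → ℝ) × ℝ => divOf (Jdw₁ p.1 p.2)) (Ω ×ˢ Icc (0:ℝ) T)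
  hdivdw₂cont : ContinuousOn (fun p : (Fin 3 → ℝ) × ℝ => divOf (Jdw₂ p.1 p.2)) (Ω ×ˢ Icc (0:ℝ) T)
  -- boundedness of the fields and of their appearing first derivatives
  hw₁bdd : ∃ C : ℝ, ∀ x ∈ Ω, ∀ t ∈ Icc (0:ℝ) T, ‖w₁ x t‖ ≤ C
  hw₂bdd : ∃ C : ℝ, ∀ x ∈ Ω, ∀ t ∈ Icc (0:ℝ) T, ‖w₂ x t‖ ≤ C
  hq₁bdd : ∃ C : ℝ, ∀ x ∈ Ω, ∀ t ∈ Icc (0:ℝ) T, |q₁ x t| ≤ C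
  hq₂bdd : ∃ C : ℝ, ∀ x ∈ Ω, ∀ t ∈ Icc (0:ℝ) T, |q₂ x t| ≤ C
  hdw₁bdd : ∃ C : ℝ, ∀ x ∈ Ω, ∀ t ∈ Icc (0:ℝ) T, ‖dw₁ x t‖ ≤ C
  hdw₂bdd : ∃ C : ℝ, ∀ x ∈ Ω, ∀ t ∈ Icc (0:ℝ) T, ‖dw₂ x t‖ ≤ C
  hdq₁bdd : ∃ C : ℝ, ∀ x ∈ Ω, ∀ t ∈ Icc (0:ℝ) T, |dq₁ x t| ≤ C
  hdq₂bdd : ∃ C : ℝ, ∀ x ∈ Ω, ∀ t ∈ Icc (0:ℝ) T, |dq₂ x t| ≤ C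
  hgq₁bdd : ∃ C : ℝ, ∀ x ∈ Ω, ∀ t ∈ Icc (0:ℝ) T, ‖gq₁ x t‖ ≤ C
  hgq₂bdd : ∃ C : ℝ, ∀ x ∈ Ω, ∀ t ∈ Icc (0:ℝ) T, ‖gq₂ x t‖ ≤ C
  hdivw₁bdd : ∃ C : ℝ, ∀ x ∈ Ω, ∀ t ∈ Icc (0:ℝ) T, |divOf (Jw₁ x t)| ≤ C
  hdivw₂bdd : ∃ C : ℝ, ∀ x ∈ Ω, ∀ t ∈ Icc (0:ℝ) T, |divOf (Jw₂ x t)| ≤ C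
  hdivdw₁bdd : ∃ C : ℝ, ∀ x ∈ Ω, ∀ t ∈ Icc (0:ℝ) T, |divOf (Jdw₁ x t)| ≤ C
  hdivdw₂bdd : ∃ C : ℝ, ∀ x ∈ Ω, ∀ t ∈ Icc (0:ℝ) T, |divOf (Jdw₂ x t)| ≤ C
  -- the homogeneous DPP difference system
  pde₁ : ∀ x ∈ Ω, ∀ t ∈ Icc (0:ℝ) T,
    (γ / φ₁ x) • dw₁ x t + μ • ((K₁ x)⁻¹ *ᵥ w₁ x t) + gq₁ x t = 0
  pde₂ : ∀ x ∈ Ω, ∀ t ∈ Icc (0:ℝ) T,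
    (γ / φ₂ x) • dw₂ x t + μ • ((K₂ x)⁻¹ *ᵥ w₂ x t) + gq₂ x t = 0
  mass₁ : ∀ x ∈ Ω, ∀ t ∈ Icc (0:ℝ) T, divOf (Jw₁ x t) = -(β / μ) * (q₁ x t - q₂ x t)
  mass₂ : ∀ x ∈ Ω, ∀ t ∈ Icc (0:ℝ) T, divOf (Jw₂ x t) = (β / μ) * (q₁ x t - q₂ x t)
  -- boundary-condition encodings (H1)–(H2)
  H1₁ : ∀ t ∈ Icc (0:ℝ) T,
    (∫ x in Ω, (w₁ x t ⬝ᵥ gq₁ x t + q₁ x t * divOf (Jw₁ x t))) = 0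
  H1₂ : ∀ t ∈ Icc (0:ℝ) T,
    (∫ x in Ω, (w₂ x t ⬝ᵥ gq₂ x t + q₂ x t * divOf (Jw₂ x t))) = 0
  H2₁ : ∀ t ∈ Icc (0:ℝ) T,
    (∫ x in Ω, (dw₁ x t ⬝ᵥ gq₁ x t + q₁ x t * divOf (Jdw₁ x t))) = 0
  H2₂ : ∀ t ∈ Icc (0:ℝ) T,
    (∫ x in Ω, (dw₂ x t ⬝ᵥ gq₂ x t + q₂ x t * divOf (Jdw₂ x t))) = 0
  -- differentiation in `t` under the integral over `Ω` is valid
  leibniz : ∀ F F' : (Fin 3 → ℝ) → ℝ → ℝ,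
    (∀ x ∈ Ω, ∀ t ∈ Icc (0:ℝ) T, HasDerivWithinAt (F x) (F' x t) (Icc (0:ℝ) T) t) →
    ContinuousOn (fun p : (Fin 3 → ℝ) × ℝ => F p.1 p.2) (Ω ×ˢ Icc (0:ℝ) T) →
    ContinuousOn (fun p : (Fin 3 → ℝ) × ℝ => F' p.1 p.2) (Ω ×ˢ Icc (0:ℝ) T) →
    (∃ C : ℝ, ∀ x ∈ Ω, ∀ t ∈ Icc (0:ℝ) T, |F x t| ≤ C) →
    (∃ C : ℝ, ∀ x ∈ Ω, ∀ t ∈ Icc (0:ℝ) T, |F' x t| ≤ C) →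
    ∀ t ∈ Icc (0:ℝ) T,
      HasDerivWithinAt (fun s => ∫ x in Ω, F x s) (∫ x in Ω, F' x t) (Icc (0:ℝ) T) t

/-- The (kinetic) energy `E(t) = ∫_Ω [ γ/(2φ₁) |w₁|² + γ/(2φ₂) |w₂|² ] dx` of the
difference system. -/
noncomputable def DPP.E (S : DPP) : ℝ → ℝ := fun t =>
  ∫ x in S.Ω, ((S.γ / (2 * S.φ₁ x)) * (S.w₁ x t ⬝ᵥ S.w₁ x t)
    + (S.γ / (2 * S.φ₂ x)) * (S.w₂ x t ⬝ᵥ S.w₂ x t))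

/-!
Write `ρᵢ = γ/(2φᵢ)`. Dotting the momentum equations with `wᵢ`, integrating over `Ω` and using
(H1) together with the mass-exchange equations gives
`E' = -∫ [μ (w₁·K₁⁻¹w₁ + w₂·K₂⁻¹w₂) + (β/μ)(q₁ - q₂)²]`.
Differentiating once more and dotting the momentum equations with `∂ₜwᵢ` instead, (H2) yields
`E'' = 4 ∫ [ρ₁|∂ₜw₁|² + ρ₂|∂ₜw₂|²]`. Finally `λ ↦ ∫ ρ₁|w₁ + λ∂ₜw₁|² + ρ₂|w₂ + λ∂ₜw₂|²`
is a nonnegative quadratic `E + λE' + λ²E''/4`, so its discriminant `E'² - E E''` is `≤ 0`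
(this is the Cauchy–Schwarz step).
-/

section BoundedContinuousOn

variable {α : Type*} [TopologicalSpace α]

def boundedContinuousOn (P : Set α) : Subalgebra ℝ (α → ℝ) where
  carrier := {f | ContinuousOn f P ∧ ∃ C, ∀ a ∈ P, |f a| ≤ C}
  mul_mem' := by
    rintro f g ⟨hf, C, hC⟩ ⟨hg, D, hD⟩
    refine ⟨hf.mul hg, C * D, fun a ha => ?_⟩
    rw [Pi.mul_apply, abs_mul]
    exact mul_le_mul (hC a ha) (hD a ha) (abs_nonneg _) ((abs_nonneg _).trans (hC a ha))
  add_mem' := by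
    rintro f g ⟨hf, C, hC⟩ ⟨hg, D, hD⟩
    exact ⟨hf.add hg, C + D, fun a ha => (abs_add_le _ _).trans (add_le_add (hC a ha) (hD a ha))⟩
  algebraMap_mem' c := ⟨continuousOn_const, |c|, fun _ _ => le_rfl⟩

theorem const_mem_boundedContinuousOn (P : Set α) (c : ℝ) :
    (fun _ => c) ∈ boundedContinuousOn P :=
  (boundedContinuousOn P).algebraMap_mem c

theorem integrableOn_slice_of_mem_boundedContinuousOn {X Y : Type*} [TopologicalSpace X]
    [MeasurableSpace X] [OpensMeasurableSpace X] [TopologicalSpace Y] {μ : Measure X}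
    {Ω : Set X} {I : Set Y} (hΩ : MeasurableSet Ω) (hμΩ : μ Ω ≠ ⊤) {f : X × Y → ℝ}
    (hf : f ∈ boundedContinuousOn (Ω ×ˢ I)) {t : Y} (ht : t ∈ I) :
    IntegrableOn (fun x => f (x, t)) Ω μ := by
  obtain ⟨hc, C, hC⟩ := hf
  have hslice : ContinuousOn (fun x => f (x, t)) Ω :=
    hc.comp (continuousOn_id.prodMk continuousOn_const) fun x hx => ⟨hx, ht⟩
  refine IntegrableOn.of_bound hμΩ.lt_top (hslice.aestronglyMeasurable hΩ) C ?_
  exact (ae_restrict_iff' hΩ).2 (Filter.Eventually.of_forall fun x hx => hC (x, t) ⟨hx, ht⟩)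

end BoundedContinuousOn

theorem Subalgebra.dotProduct_mem {R α ι : Type*} [CommSemiring R] [Fintype ι]
    (A : Subalgebra R (α → R)) {f g : α → ι → R} (hf : ∀ i, (fun a => f a i) ∈ A)
    (hg : ∀ i, (fun a => g a i) ∈ A) : (fun a => f a ⬝ᵥ g a) ∈ A := by
  have : (fun a => f a ⬝ᵥ g a) = ∑ i, (fun a => f a i) * (fun a => g a i) := by
    ext a; simp [dotProduct]
  rw [this]
  exact A.sum_mem fun i _ => A.mul_mem (hf i) (hg i)

theorem Subalgebra.mulVec_mem {R α m n : Type*} [CommSemiring R] [Fintype n]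
    (A : Subalgebra R (α → R)) {M : α → Matrix m n R} {v : α → n → R}
    (hM : ∀ i j, (fun a => M a i j) ∈ A) (hv : ∀ j, (fun a => v a j) ∈ A) (i : m) :
    (fun a => (M a *ᵥ v a) i) ∈ A :=
  A.dotProduct_mem (hM i) hv

theorem HasDerivWithinAt.dotProduct {ι : Type*} [Fintype ι] {f g : ℝ → ι → ℝ} {f' g' : ι → ℝ}
    {s : Set ℝ} {t : ℝ} (hf : HasDerivWithinAt f f' s t) (hg : HasDerivWithinAt g g' s t) :
    HasDerivWithinAt (fun u => f u ⬝ᵥ g u) (f' ⬝ᵥ g t + f t ⬝ᵥ g') s t := by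
  have h := HasDerivWithinAt.fun_sum (u := Finset.univ) fun i _ =>
    (hasDerivWithinAt_pi.1 hf i).fun_mul (hasDerivWithinAt_pi.1 hg i)
  simpa only [_root_.dotProduct, Finset.sum_add_distrib] using h

theorem HasDerivWithinAt.const_mulVec {m n : Type*} [Fintype m] [Fintype n]
    (M : Matrix m n ℝ) {f : ℝ → n → ℝ} {f' : n → ℝ} {s : Set ℝ} {t : ℝ}
    (hf : HasDerivWithinAt f f' s t) : HasDerivWithinAt (fun u => M *ᵥ f u) (M *ᵥ f') s t :=
  M.mulVecLin.toContinuousLinearMap.hasFDerivAt.comp_hasDerivWithinAt t hf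

theorem derivWithin_derivWithin_eq {f f' : ℝ → ℝ} {s : Set ℝ} {t f'' : ℝ}
    (hs : UniqueDiffOn ℝ s) (hf : ∀ u ∈ s, HasDerivWithinAt f (f' u) s u) (ht : t ∈ s)
    (hf' : HasDerivWithinAt f' f'' s t) : derivWithin (derivWithin f s) s t = f'' := by
  have hEq : EqOn (derivWithin f s) f' s := fun u hu => (hf u hu).derivWithin (hs u hu)
  rw [derivWithin_congr hEq (hEq ht), hf'.derivWithin (hs t ht)]

theorem Matrix.IsSymm.dotProduct_mulVec_comm {n : Type*} [Fintype n] {M : Matrix n n ℝ}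
    (hM : M.IsSymm) (v w : n → ℝ) : v ⬝ᵥ (M *ᵥ w) = w ⬝ᵥ (M *ᵥ v) := by
  rw [Matrix.dotProduct_mulVec, ← Matrix.mulVec_transpose, hM.eq, dotProduct_comm]

theorem dotProduct_eq_zero_of_smul_add_smul_add_eq_zero {ι : Type*} [Fintype ι] {a b : ℝ}
    {u w g : ι → ℝ} (h : a • u + b • w + g = 0) (v : ι → ℝ) :
    a * (v ⬝ᵥ u) + b * (v ⬝ᵥ w) + v ⬝ᵥ g = 0 := by
  simpa only [dotProduct_add, dotProduct_smul, smul_eq_mul, dotProduct_zero] using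
    congrArg (v ⬝ᵥ ·) h

theorem weighted_quadratic_nonneg {ι : Type*} [Fintype ι] {ρ : ℝ} (hρ : 0 ≤ ρ)
    (w d : ι → ℝ) (l : ℝ) :
    0 ≤ ρ * (d ⬝ᵥ d) * (l * l) + ρ * (d ⬝ᵥ w + w ⬝ᵥ d) * l + ρ * (w ⬝ᵥ w) := by
  have h : ρ * (d ⬝ᵥ d) * (l * l) + ρ * (d ⬝ᵥ w + w ⬝ᵥ d) * l + ρ * (w ⬝ᵥ w)
      = ρ * ((w + l • d) ⬝ᵥ (w + l • d)) := by
    simp only [add_dotProduct, dotProduct_add, smul_dotProduct, dotProduct_smul, smul_eq_mul]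
    ring
  rw [h]
  exact mul_nonneg hρ (Finset.sum_nonneg fun i _ => mul_self_nonneg _)

theorem setIntegral_eq_of_eq_sub_sub {X : Type*} [MeasurableSpace X] {μ : Measure X} {s : Set X}
    {f g b₁ b₂ : X → ℝ} (hs : MeasurableSet s) (hf : ∀ x ∈ s, f x = g x - b₁ x - b₂ x)
    (hg : IntegrableOn g s μ) (hb₁ : IntegrableOn b₁ s μ) (hb₂ : IntegrableOn b₂ s μ)
    (h₁ : ∫ x in s, b₁ x ∂μ = 0) (h₂ : ∫ x in s, b₂ x ∂μ = 0) :
    ∫ x in s, f x ∂μ = ∫ x in s, g x ∂μ := by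
  rw [setIntegral_congr_fun hs hf, integral_sub (hg.fun_sub hb₁) hb₂, integral_sub hg hb₁, h₁, h₂,
    sub_zero, sub_zero]

namespace DPP

variable (S : DPP)

abbrev boundedContinuous : Subalgebra ℝ ((Fin 3 → ℝ) × ℝ → ℝ) :=
  boundedContinuousOn (S.Ω ×ˢ Icc 0 S.T)

theorem mem_boundedContinuous_of_bound {g : (Fin 3 → ℝ) → ℝ → ℝ}
    (hc : ContinuousOn (fun p : (Fin 3 → ℝ) × ℝ => g p.1 p.2) (S.Ω ×ˢ Icc 0 S.T))
    (hb : ∃ C : ℝ, ∀ x ∈ S.Ω, ∀ t ∈ Icc (0:ℝ) S.T, |g x t| ≤ C) :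
    (fun p => g p.1 p.2) ∈ S.boundedContinuous := by
  obtain ⟨C, hC⟩ := hb
  exact ⟨hc, C, fun p hp => hC p.1 hp.1 p.2 hp.2⟩

theorem coord_mem_boundedContinuous_of_bound {g : (Fin 3 → ℝ) → ℝ → Fin 3 → ℝ}
    (hc : ContinuousOn (fun p : (Fin 3 → ℝ) × ℝ => g p.1 p.2) (S.Ω ×ˢ Icc 0 S.T))
    (hb : ∃ C : ℝ, ∀ x ∈ S.Ω, ∀ t ∈ Icc (0:ℝ) S.T, ‖g x t‖ ≤ C) (i : Fin 3) :
    (fun p => g p.1 p.2 i) ∈ S.boundedContinuous := by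
  obtain ⟨C, hC⟩ := hb
  exact ⟨(continuous_apply i).comp_continuousOn hc, C, fun p hp =>
    (norm_le_pi_norm (g p.1 p.2) i).trans (hC p.1 hp.1 p.2 hp.2)⟩

theorem spatial_mem_boundedContinuous {g : (Fin 3 → ℝ) → ℝ} (hc : ContinuousOn g S.Ω)
    (hb : ∃ C : ℝ, ∀ x ∈ S.Ω, |g x| ≤ C) : (fun p => g p.1) ∈ S.boundedContinuous := by
  obtain ⟨C, hC⟩ := hb
  exact ⟨hc.comp continuousOn_fst fun p hp => hp.1, C, fun p hp => hC p.1 hp.1⟩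

theorem weight_mem_boundedContinuous {φ : (Fin 3 → ℝ) → ℝ} (hc : ContinuousOn φ S.Ω)
    (hb : ∃ c > (0:ℝ), ∃ C : ℝ, ∀ x ∈ S.Ω, c ≤ φ x ∧ φ x ≤ C) :
    (fun p => S.γ / (2 * φ p.1)) ∈ S.boundedContinuous := by
  obtain ⟨c, hc₀, _, hcφ⟩ := hb
  have hpos : ∀ x ∈ S.Ω, 0 < 2 * φ x := fun x hx => by linarith [(hcφ x hx).1]
  refine S.spatial_mem_boundedContinuous (g := fun x => S.γ / (2 * φ x))
    (continuousOn_const.div (continuousOn_const.mul hc) fun x hx => (hpos x hx).ne')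
    ⟨S.γ / (2 * c), fun x hx => ?_⟩
  rw [abs_of_nonneg (div_nonneg S.hγ.le (hpos x hx).le)]
  exact div_le_div_of_nonneg_left S.hγ.le (by positivity) (by linarith [(hcφ x hx).1])

theorem K₁inv_mem (i j : Fin 3) : (fun p => (S.K₁ p.1)⁻¹ i j) ∈ S.boundedContinuous :=
  S.spatial_mem_boundedContinuous (S.hK₁invcont i j)
    (S.hK₁invbdd.imp fun _ hC x hx => hC x hx i j)

theorem K₂inv_mem (i j : Fin 3) : (fun p => (S.K₂ p.1)⁻¹ i j) ∈ S.boundedContinuous :=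
  S.spatial_mem_boundedContinuous (S.hK₂invcont i j)
    (S.hK₂invbdd.imp fun _ hC x hx => hC x hx i j)

theorem ρ₁_mem : (fun p => S.γ / (2 * S.φ₁ p.1)) ∈ S.boundedContinuous :=
  S.weight_mem_boundedContinuous S.hφ₁cont S.hφ₁bdd

theorem ρ₂_mem : (fun p => S.γ / (2 * S.φ₂ p.1)) ∈ S.boundedContinuous :=
  S.weight_mem_boundedContinuous S.hφ₂cont S.hφ₂bdd

theorem w₁_mem (i : Fin 3) : (fun p => S.w₁ p.1 p.2 i) ∈ S.boundedContinuous :=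
  S.coord_mem_boundedContinuous_of_bound S.hw₁cont S.hw₁bdd i

theorem w₂_mem (i : Fin 3) : (fun p => S.w₂ p.1 p.2 i) ∈ S.boundedContinuous :=
  S.coord_mem_boundedContinuous_of_bound S.hw₂cont S.hw₂bdd i

theorem dw₁_mem (i : Fin 3) : (fun p => S.dw₁ p.1 p.2 i) ∈ S.boundedContinuous :=
  S.coord_mem_boundedContinuous_of_bound S.hdw₁cont S.hdw₁bdd i

theorem dw₂_mem (i : Fin 3) : (fun p => S.dw₂ p.1 p.2 i) ∈ S.boundedContinuous :=
  S.coord_mem_boundedContinuous_of_bound S.hdw₂cont S.hdw₂bdd i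

theorem gq₁_mem (i : Fin 3) : (fun p => S.gq₁ p.1 p.2 i) ∈ S.boundedContinuous :=
  S.coord_mem_boundedContinuous_of_bound S.hgq₁cont S.hgq₁bdd i

theorem gq₂_mem (i : Fin 3) : (fun p => S.gq₂ p.1 p.2 i) ∈ S.boundedContinuous :=
  S.coord_mem_boundedContinuous_of_bound S.hgq₂cont S.hgq₂bdd i

theorem q₁_mem : (fun p => S.q₁ p.1 p.2) ∈ S.boundedContinuous :=
  S.mem_boundedContinuous_of_bound S.hq₁cont S.hq₁bdd

theorem q₂_mem : (fun p => S.q₂ p.1 p.2) ∈ S.boundedContinuous :=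
  S.mem_boundedContinuous_of_bound S.hq₂cont S.hq₂bdd

theorem dq₁_mem : (fun p => S.dq₁ p.1 p.2) ∈ S.boundedContinuous :=
  S.mem_boundedContinuous_of_bound S.hdq₁cont S.hdq₁bdd

theorem dq₂_mem : (fun p => S.dq₂ p.1 p.2) ∈ S.boundedContinuous :=
  S.mem_boundedContinuous_of_bound S.hdq₂cont S.hdq₂bdd

theorem divw₁_mem : (fun p => divOf (S.Jw₁ p.1 p.2)) ∈ S.boundedContinuous :=
  S.mem_boundedContinuous_of_bound S.hdivw₁cont S.hdivw₁bdd

theorem divw₂_mem : (fun p => divOf (S.Jw₂ p.1 p.2)) ∈ S.boundedContinuous :=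
  S.mem_boundedContinuous_of_bound S.hdivw₂cont S.hdivw₂bdd

theorem divdw₁_mem : (fun p => divOf (S.Jdw₁ p.1 p.2)) ∈ S.boundedContinuous :=
  S.mem_boundedContinuous_of_bound S.hdivdw₁cont S.hdivdw₁bdd

theorem divdw₂_mem : (fun p => divOf (S.Jdw₂ p.1 p.2)) ∈ S.boundedContinuous :=
  S.mem_boundedContinuous_of_bound S.hdivdw₂cont S.hdivdw₂bdd

noncomputable def energyDensity (x : Fin 3 → ℝ) (t : ℝ) : ℝ :=
  S.γ / (2 * S.φ₁ x) * (S.w₁ x t ⬝ᵥ S.w₁ x t) + S.γ / (2 * S.φ₂ x) * (S.w₂ x t ⬝ᵥ S.w₂ x t)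

noncomputable def energyDensityDeriv (x : Fin 3 → ℝ) (t : ℝ) : ℝ :=
  S.γ / (2 * S.φ₁ x) * (S.dw₁ x t ⬝ᵥ S.w₁ x t + S.w₁ x t ⬝ᵥ S.dw₁ x t)
    + S.γ / (2 * S.φ₂ x) * (S.dw₂ x t ⬝ᵥ S.w₂ x t + S.w₂ x t ⬝ᵥ S.dw₂ x t)

noncomputable def rateEnergyDensity (x : Fin 3 → ℝ) (t : ℝ) : ℝ :=
  S.γ / (2 * S.φ₁ x) * (S.dw₁ x t ⬝ᵥ S.dw₁ x t) + S.γ / (2 * S.φ₂ x) * (S.dw₂ x t ⬝ᵥ S.dw₂ x t)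

noncomputable def dissipation (x : Fin 3 → ℝ) (t : ℝ) : ℝ :=
  S.μ * (S.w₁ x t ⬝ᵥ ((S.K₁ x)⁻¹ *ᵥ S.w₁ x t)) + S.μ * (S.w₂ x t ⬝ᵥ ((S.K₂ x)⁻¹ *ᵥ S.w₂ x t))
    + S.β / S.μ * ((S.q₁ x t - S.q₂ x t) * (S.q₁ x t - S.q₂ x t))

noncomputable def dissipationDeriv (x : Fin 3 → ℝ) (t : ℝ) : ℝ :=
  S.μ * (S.dw₁ x t ⬝ᵥ ((S.K₁ x)⁻¹ *ᵥ S.w₁ x t) + S.w₁ x t ⬝ᵥ ((S.K₁ x)⁻¹ *ᵥ S.dw₁ x t))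
    + S.μ * (S.dw₂ x t ⬝ᵥ ((S.K₂ x)⁻¹ *ᵥ S.w₂ x t) + S.w₂ x t ⬝ᵥ ((S.K₂ x)⁻¹ *ᵥ S.dw₂ x t))
    + S.β / S.μ * ((S.dq₁ x t - S.dq₂ x t) * (S.q₁ x t - S.q₂ x t)
      + (S.q₁ x t - S.q₂ x t) * (S.dq₁ x t - S.dq₂ x t))

theorem energyDensity_mem : (fun p => S.energyDensity p.1 p.2) ∈ S.boundedContinuous :=
  add_mem (mul_mem S.ρ₁_mem (Subalgebra.dotProduct_mem _ S.w₁_mem S.w₁_mem))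
    (mul_mem S.ρ₂_mem (Subalgebra.dotProduct_mem _ S.w₂_mem S.w₂_mem))

theorem energyDensityDeriv_mem :
    (fun p => S.energyDensityDeriv p.1 p.2) ∈ S.boundedContinuous :=
  add_mem
    (mul_mem S.ρ₁_mem (add_mem (Subalgebra.dotProduct_mem _ S.dw₁_mem S.w₁_mem)
      (Subalgebra.dotProduct_mem _ S.w₁_mem S.dw₁_mem)))
    (mul_mem S.ρ₂_mem (add_mem (Subalgebra.dotProduct_mem _ S.dw₂_mem S.w₂_mem)
      (Subalgebra.dotProduct_mem _ S.w₂_mem S.dw₂_mem)))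

theorem rateEnergyDensity_mem : (fun p => S.rateEnergyDensity p.1 p.2) ∈ S.boundedContinuous :=
  add_mem (mul_mem S.ρ₁_mem (Subalgebra.dotProduct_mem _ S.dw₁_mem S.dw₁_mem))
    (mul_mem S.ρ₂_mem (Subalgebra.dotProduct_mem _ S.dw₂_mem S.dw₂_mem))

theorem dissipation_mem : (fun p => S.dissipation p.1 p.2) ∈ S.boundedContinuous :=
  have hq := sub_mem S.q₁_mem S.q₂_mem
  add_mem (add_mem
    (mul_mem (const_mem_boundedContinuousOn _ _)
      (Subalgebra.dotProduct_mem _ S.w₁_mem (Subalgebra.mulVec_mem _ S.K₁inv_mem S.w₁_mem)))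
    (mul_mem (const_mem_boundedContinuousOn _ _)
      (Subalgebra.dotProduct_mem _ S.w₂_mem (Subalgebra.mulVec_mem _ S.K₂inv_mem S.w₂_mem))))
    (mul_mem (const_mem_boundedContinuousOn _ _) (mul_mem hq hq))

theorem dissipationDeriv_mem : (fun p => S.dissipationDeriv p.1 p.2) ∈ S.boundedContinuous :=
  have hq := sub_mem S.q₁_mem S.q₂_mem
  have hdq := sub_mem S.dq₁_mem S.dq₂_mem
  add_mem (add_mem
    (mul_mem (const_mem_boundedContinuousOn _ _) (add_mem
      (Subalgebra.dotProduct_mem _ S.dw₁_mem (Subalgebra.mulVec_mem _ S.K₁inv_mem S.w₁_mem))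
      (Subalgebra.dotProduct_mem _ S.w₁_mem (Subalgebra.mulVec_mem _ S.K₁inv_mem S.dw₁_mem))))
    (mul_mem (const_mem_boundedContinuousOn _ _) (add_mem
      (Subalgebra.dotProduct_mem _ S.dw₂_mem (Subalgebra.mulVec_mem _ S.K₂inv_mem S.w₂_mem))
      (Subalgebra.dotProduct_mem _ S.w₂_mem (Subalgebra.mulVec_mem _ S.K₂inv_mem S.dw₂_mem)))))
    (mul_mem (const_mem_boundedContinuousOn _ _) (add_mem (mul_mem hdq hq) (mul_mem hq hdq)))

theorem integrableOn_slice {f : (Fin 3 → ℝ) × ℝ → ℝ} (hf : f ∈ S.boundedContinuous) {t : ℝ}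
    (ht : t ∈ Icc (0:ℝ) S.T) : IntegrableOn (fun x => f (x, t)) S.Ω :=
  integrableOn_slice_of_mem_boundedContinuousOn S.hΩopen.measurableSet
    S.hΩbdd.measure_lt_top.ne hf ht

theorem hasDerivWithinAt_integral {F F' : (Fin 3 → ℝ) → ℝ → ℝ}
    (hd : ∀ x ∈ S.Ω, ∀ t ∈ Icc (0:ℝ) S.T, HasDerivWithinAt (F x) (F' x t) (Icc 0 S.T) t)
    (hF : (fun p => F p.1 p.2) ∈ S.boundedContinuous)
    (hF' : (fun p => F' p.1 p.2) ∈ S.boundedContinuous) {t : ℝ} (ht : t ∈ Icc (0:ℝ) S.T) :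
    HasDerivWithinAt (fun s => ∫ x in S.Ω, F x s) (∫ x in S.Ω, F' x t) (Icc 0 S.T) t := by
  obtain ⟨hFc, C, hC⟩ := hF
  obtain ⟨hF'c, C', hC'⟩ := hF'
  exact S.leibniz F F' hd hFc hF'c ⟨C, fun x hx s hs => hC (x, s) ⟨hx, hs⟩⟩
    ⟨C', fun x hx s hs => hC' (x, s) ⟨hx, hs⟩⟩ t ht

theorem hasDerivWithinAt_energyDensity {x : Fin 3 → ℝ} (hx : x ∈ S.Ω) {t : ℝ}
    (ht : t ∈ Icc (0:ℝ) S.T) :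
    HasDerivWithinAt (S.energyDensity x) (S.energyDensityDeriv x t) (Icc 0 S.T) t :=
  (((S.hdw₁ x hx t ht).dotProduct (S.hdw₁ x hx t ht)).const_mul _).add
    (((S.hdw₂ x hx t ht).dotProduct (S.hdw₂ x hx t ht)).const_mul _)

theorem hasDerivWithinAt_dissipation {x : Fin 3 → ℝ} (hx : x ∈ S.Ω) {t : ℝ}
    (ht : t ∈ Icc (0:ℝ) S.T) :
    HasDerivWithinAt (S.dissipation x) (S.dissipationDeriv x t) (Icc 0 S.T) t :=
  have hq := (S.hdq₁ x hx t ht).sub (S.hdq₂ x hx t ht)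
  ((((S.hdw₁ x hx t ht).dotProduct ((S.hdw₁ x hx t ht).const_mulVec _)).const_mul _).add
    (((S.hdw₂ x hx t ht).dotProduct ((S.hdw₂ x hx t ht).const_mulVec _)).const_mul _)).add
    ((hq.mul hq).const_mul _)

theorem divOf_Jdw₁ {x : Fin 3 → ℝ} (hx : x ∈ S.Ω) {t : ℝ} (ht : t ∈ Icc (0:ℝ) S.T) :
    divOf (S.Jdw₁ x t) = -(S.β / S.μ) * (S.dq₁ x t - S.dq₂ x t) :=
  (uniqueDiffOn_Icc S.hT t ht).eq_deriv _ (S.hdivcomm₁ x hx t ht)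
    ((((S.hdq₁ x hx t ht).sub (S.hdq₂ x hx t ht)).const_mul _).congr
      (fun s hs => S.mass₁ x hx s hs) (S.mass₁ x hx t ht))

theorem divOf_Jdw₂ {x : Fin 3 → ℝ} (hx : x ∈ S.Ω) {t : ℝ} (ht : t ∈ Icc (0:ℝ) S.T) :
    divOf (S.Jdw₂ x t) = S.β / S.μ * (S.dq₁ x t - S.dq₂ x t) :=
  (uniqueDiffOn_Icc S.hT t ht).eq_deriv _ (S.hdivcomm₂ x hx t ht)
    ((((S.hdq₁ x hx t ht).sub (S.hdq₂ x hx t ht)).const_mul _).congr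
      (fun s hs => S.mass₂ x hx s hs) (S.mass₂ x hx t ht))

theorem energyDensityDeriv_eq {x : Fin 3 → ℝ} (hx : x ∈ S.Ω) {t : ℝ} (ht : t ∈ Icc (0:ℝ) S.T) :
    S.energyDensityDeriv x t = -S.dissipation x t
      - (S.w₁ x t ⬝ᵥ S.gq₁ x t + S.q₁ x t * divOf (S.Jw₁ x t))
      - (S.w₂ x t ⬝ᵥ S.gq₂ x t + S.q₂ x t * divOf (S.Jw₂ x t)) := by
  have h₁ := dotProduct_eq_zero_of_smul_add_smul_add_eq_zero (S.pde₁ x hx t ht) (S.w₁ x t)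
  have h₂ := dotProduct_eq_zero_of_smul_add_smul_add_eq_zero (S.pde₂ x hx t ht) (S.w₂ x t)
  rw [energyDensityDeriv, dissipation, dotProduct_comm (S.dw₁ x t), dotProduct_comm (S.dw₂ x t),
    S.mass₁ x hx t ht, S.mass₂ x hx t ht]
  linear_combination h₁ + h₂

theorem dissipationDeriv_eq {x : Fin 3 → ℝ} (hx : x ∈ S.Ω) {t : ℝ} (ht : t ∈ Icc (0:ℝ) S.T) :
    S.dissipationDeriv x t = -4 * S.rateEnergyDensity x t
      - 2 * (S.dw₁ x t ⬝ᵥ S.gq₁ x t + S.q₁ x t * divOf (S.Jdw₁ x t))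
      - 2 * (S.dw₂ x t ⬝ᵥ S.gq₂ x t + S.q₂ x t * divOf (S.Jdw₂ x t)) := by
  have h₁ := dotProduct_eq_zero_of_smul_add_smul_add_eq_zero (S.pde₁ x hx t ht) (S.dw₁ x t)
  have h₂ := dotProduct_eq_zero_of_smul_add_smul_add_eq_zero (S.pde₂ x hx t ht) (S.dw₂ x t)
  rw [dissipationDeriv, rateEnergyDensity,
    ((S.hK₁symm x hx).inv).dotProduct_mulVec_comm (S.w₁ x t),
    ((S.hK₂symm x hx).inv).dotProduct_mulVec_comm (S.w₂ x t), S.divOf_Jdw₁ hx ht,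
    S.divOf_Jdw₂ hx ht]
  linear_combination 2 * h₁ + 2 * h₂

theorem integral_energyDensityDeriv {t : ℝ} (ht : t ∈ Icc (0:ℝ) S.T) :
    ∫ x in S.Ω, S.energyDensityDeriv x t = -∫ x in S.Ω, S.dissipation x t := by
  rw [setIntegral_eq_of_eq_sub_sub S.hΩopen.measurableSet
    (fun x hx => S.energyDensityDeriv_eq hx ht)
    (S.integrableOn_slice S.dissipation_mem ht).neg
    (S.integrableOn_slice (add_mem (Subalgebra.dotProduct_mem _ S.w₁_mem S.gq₁_mem)
      (mul_mem S.q₁_mem S.divw₁_mem)) ht)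
    (S.integrableOn_slice (add_mem (Subalgebra.dotProduct_mem _ S.w₂_mem S.gq₂_mem)
      (mul_mem S.q₂_mem S.divw₂_mem)) ht)
    (S.H1₁ t ht) (S.H1₂ t ht), integral_neg]

theorem integral_dissipationDeriv {t : ℝ} (ht : t ∈ Icc (0:ℝ) S.T) :
    ∫ x in S.Ω, S.dissipationDeriv x t = -4 * ∫ x in S.Ω, S.rateEnergyDensity x t := by
  rw [setIntegral_eq_of_eq_sub_sub S.hΩopen.measurableSet
    (fun x hx => S.dissipationDeriv_eq hx ht)
    ((S.integrableOn_slice S.rateEnergyDensity_mem ht).const_mul _)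
    ((S.integrableOn_slice (add_mem (Subalgebra.dotProduct_mem _ S.dw₁_mem S.gq₁_mem)
      (mul_mem S.q₁_mem S.divdw₁_mem)) ht).const_mul _)
    ((S.integrableOn_slice (add_mem (Subalgebra.dotProduct_mem _ S.dw₂_mem S.gq₂_mem)
      (mul_mem S.q₂_mem S.divdw₂_mem)) ht).const_mul _)
    (by rw [integral_const_mul, S.H2₁ t ht, mul_zero])
    (by rw [integral_const_mul, S.H2₂ t ht, mul_zero]), integral_const_mul]

theorem hasDerivWithinAt_E {t : ℝ} (ht : t ∈ Icc (0:ℝ) S.T) :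
    HasDerivWithinAt S.E (-∫ x in S.Ω, S.dissipation x t) (Icc 0 S.T) t :=
  (S.hasDerivWithinAt_integral (fun _ hx _ hs => S.hasDerivWithinAt_energyDensity hx hs)
    S.energyDensity_mem S.energyDensityDeriv_mem ht).congr_deriv
    (S.integral_energyDensityDeriv ht)

theorem hasDerivWithinAt_neg_integral_dissipation {t : ℝ} (ht : t ∈ Icc (0:ℝ) S.T) :
    HasDerivWithinAt (fun s => -∫ x in S.Ω, S.dissipation x s)
      (4 * ∫ x in S.Ω, S.rateEnergyDensity x t) (Icc 0 S.T) t :=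
  (S.hasDerivWithinAt_integral (fun _ hx _ hs => S.hasDerivWithinAt_dissipation hx hs)
    S.dissipation_mem S.dissipationDeriv_mem ht).neg.congr_deriv
    (by rw [S.integral_dissipationDeriv ht]; ring)

theorem energy_quadratic_nonneg {t : ℝ} (ht : t ∈ Icc (0:ℝ) S.T) (l : ℝ) :
    0 ≤ (∫ x in S.Ω, S.rateEnergyDensity x t) * (l * l)
      + (∫ x in S.Ω, S.energyDensityDeriv x t) * l + S.E t := by
  have hpt : ∀ x ∈ S.Ω, 0 ≤ S.rateEnergyDensity x t * (l * l)
      + S.energyDensityDeriv x t * l + S.energyDensity x t := fun x hx => by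
    have h₁ := weighted_quadratic_nonneg (ρ := S.γ / (2 * S.φ₁ x))
      (div_nonneg S.hγ.le (by linarith [S.hφ₁pos x hx])) (S.w₁ x t) (S.dw₁ x t) l
    have h₂ := weighted_quadratic_nonneg (ρ := S.γ / (2 * S.φ₂ x))
      (div_nonneg S.hγ.le (by linarith [S.hφ₂pos x hx])) (S.w₂ x t) (S.dw₂ x t) l
    rw [rateEnergyDensity, energyDensityDeriv, energyDensity]
    linear_combination h₁ + h₂
  have hA := (S.integrableOn_slice S.rateEnergyDensity_mem ht).mul_const (l * l)
  have hF' := (S.integrableOn_slice S.energyDensityDeriv_mem ht).mul_const l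
  calc 0 ≤ ∫ x in S.Ω, (S.rateEnergyDensity x t * (l * l)
          + S.energyDensityDeriv x t * l + S.energyDensity x t) :=
        setIntegral_nonneg S.hΩopen.measurableSet hpt
    _ = _ := by
      rw [integral_add (hA.fun_add hF') (S.integrableOn_slice S.energyDensity_mem ht),
        integral_add hA hF', integral_mul_const, integral_mul_const]
      rfl

end DPP

/-- **Proposition 3.3 (logarithmic convexity of the energy)**: for the homogeneous DPP
difference system, for every `t ∈ [0,T]`, `(E′(t))² ≤ E(t)·E″(t)`. -/
theorem stmt_4 (S : DPP) :
    ∀ t ∈ Icc (0:ℝ) S.T,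
      (derivWithin S.E (Icc (0:ℝ) S.T) t) ^ 2 ≤
        S.E t *
          derivWithin (fun s => derivWithin S.E (Icc (0:ℝ) S.T) s) (Icc (0:ℝ) S.T) t := by
  intro t ht
  have hu := uniqueDiffOn_Icc S.hT
  rw [(S.hasDerivWithinAt_E ht).derivWithin (hu t ht), derivWithin_derivWithin_eq hu
    (fun s hs => S.hasDerivWithinAt_E hs) ht (S.hasDerivWithinAt_neg_integral_dissipation ht)]
  have hdiscr := discrim_le_zero (S.energy_quadratic_nonneg ht)
  rw [discrim, S.integral_energyDensityDeriv ht] at hdiscr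
  linear_combination hdiscr
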